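/- Let n ≥ 1 and let g_1,…,g_n be real constants. Define Q : ℝ^n × ℝ^n → ℝ by Q(x,z) = exp( g_1 e^{z_1} + Σ_{i=1}^{n−1} ( e^{x_i − z_i} + g_{i+1} e^{z_{i+1} − x_i} ) + e^{x_n − z_n} ). Then for all x, z ∈ ℝ^n: −(1/2) Σ_{i=1}^{n} ∂²Q/∂x_i² + [ g_1 e^{x_1} + Σ_{i=1}^{n−1} g_{i+1} e^{x_{i+1} − x_i} ] Q = −(1/2) Σ_{i=1}^{n} ∂²Q/∂z_i² + [ (g_1/2)( e^{z_1} + g_1 e^{2 z_1} ) + Σ_{i=1}^{n−1} g_{i+1} e^{z_{i+1} − z_i} ] Q. That is, Q intertwines the quadratic Hamiltonians of the B_n and BC_n open Toda chains. -/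

import Mathlib

open Real

/-- Second partial derivative of `f` in the `i`-th coordinate at `x`. -/
noncomputable def pd2 {k : ℕ} (f : (Fin k → ℝ) → ℝ) (i : Fin k) (x : Fin k → ℝ) : ℝ :=
  deriv (deriv (fun t : ℝ => f (Function.update x i t))) (x i)

/-- The elementary kernel intertwining the `B_n` and `BC_n` open Toda
chains (`n = m + 1 ≥ 1`):
`Q(x,z) = exp( g_1 e^{z_1} + Σ_{i=1}^{n−1} ( e^{x_i − z_i} + g_{i+1} e^{z_{i+1} − x_i} ) + e^{x_n − z_n} )`. -/
noncomputable def Qker (m : ℕ) (g x z : Fin (m + 1) → ℝ) : ℝ :=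
  Real.exp (g 0 * Real.exp (z 0)
    + (∑ i : Fin m, (Real.exp (x i.castSucc - z i.castSucc)
        + g i.succ * Real.exp (z i.succ - x i.castSucc)))
    + Real.exp (x (Fin.last m) - z (Fin.last m)))

/-!
Write `Q = exp S`. For fixed `z`, the exponent `S` is a sum of one-variable functions
`a e^{x_i - p} + b e^{q - x_i}`, one for each coordinate `x_i`; for fixed `x` it splits in the same
way over the coordinates `z_i`, with a different grouping of the same terms. Hence
`∂²Q/∂t² = ((∂S/∂t)² + ∂²S/∂t²) Q` in every coordinate, and both sides of the identity are
`Q` times an exponential polynomial. With `A_i = e^{x_i - z_i}` and `B_i = g_i e^{z_i - x_{i-1}}`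
(`B_1 = g_1 e^{z_1}`), the terms `A_i² + A_i` telescope away, and the cross terms `A_i B_{i+1}`
and `B_i A_i` are exactly the two Toda potentials.
-/

theorem deriv_deriv_exp_comp {φ φ' φ'' : ℝ → ℝ} (hφ : ∀ t, HasDerivAt φ (φ' t) t)
    (hφ' : ∀ t, HasDerivAt φ' (φ'' t) t) (t : ℝ) :
    deriv (deriv fun s => exp (φ s)) t = (φ' t ^ 2 + φ'' t) * exp (φ t) := by
  have hd : deriv (fun s => exp (φ s)) = fun s => φ' s * exp (φ s) := by
    funext s
    rw [(hφ s).exp.deriv, mul_comm]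
  rw [hd]
  exact ((hφ' t).mul (hφ t).exp).deriv.trans (by ring)

theorem hasDerivAt_mul_exp_sub_add_mul_exp_sub (a b p q t : ℝ) :
    HasDerivAt (fun s => a * exp (s - p) + b * exp (q - s))
      (a * exp (t - p) - b * exp (q - t)) t := by
  have hp := ((hasDerivAt_id t).sub_const p).exp.const_mul a
  have hq := ((hasDerivAt_id t).const_sub q).exp.const_mul b
  exact (hp.add hq).congr_deriv (by simp only [id]; ring)

theorem Fintype.sum_apply_update {ι α M : Type*} [Fintype ι] [DecidableEq ι] [AddCommMonoid M]
    (f : ι → α → M) (x : ι → α) (i : ι) (t : α) :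
    ∑ j, f j (Function.update x i t j) = f i t + ∑ j ∈ Finset.univ \ {i}, f j (x j) := by
  simp only [Function.apply_update f, Finset.sum_update_of_mem (Finset.mem_univ i)]

theorem pd2_eq_of_eq_exp_sum {k : ℕ} {F : (Fin k → ℝ) → ℝ} {C : ℝ}
    {a b p q : Fin k → ℝ}
    (hF : ∀ y, F y = exp (C + ∑ j, (a j * exp (y j - p j) + b j * exp (q j - y j))))
    (i : Fin k) (x : Fin k → ℝ) :
    pd2 F i x = ((a i * exp (x i - p i) - b i * exp (q i - x i)) ^ 2
        + (a i * exp (x i - p i) + b i * exp (q i - x i))) * F x := by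
  set rest := ∑ j ∈ Finset.univ \ {i}, (a j * exp (x j - p j) + b j * exp (q j - x j))
  have hline : ∀ t, F (Function.update x i t)
      = exp ((C + rest) + (a i * exp (t - p i) + b i * exp (q i - t))) := by
    intro t
    rw [hF, Fintype.sum_apply_update (fun j s => a j * exp (s - p j) + b j * exp (q j - s)),
      add_comm _ rest, add_assoc]
  have hx : F x = exp ((C + rest) + (a i * exp (x i - p i) + b i * exp (q i - x i))) := by
    simpa using hline (x i)
  have hφ (t : ℝ) := (hasDerivAt_mul_exp_sub_add_mul_exp_sub (a i) (b i) (p i) (q i) t).const_add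
    (C + rest)
  have hφ' (t : ℝ) : HasDerivAt (fun s => a i * exp (s - p i) - b i * exp (q i - s))
      (a i * exp (t - p i) + b i * exp (q i - t)) t := by
    simpa only [sub_eq_add_neg, neg_mul, neg_neg] using
      hasDerivAt_mul_exp_sub_add_mul_exp_sub (a i) (-b i) (p i) (q i) t
  rw [pd2, funext hline, deriv_deriv_exp_comp hφ hφ', hx]

theorem Fin.sum_castSucc_sub_succ {M : Type*} [AddCommGroup M] {m : ℕ} (f : Fin (m + 1) → M) :
    ∑ j : Fin m, (f j.castSucc - f j.succ) = f 0 - f (Fin.last m) := by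
  rw [Finset.sum_sub_distrib, sub_eq_sub_iff_add_eq_add]
  exact (Fin.sum_univ_castSucc f).symm.trans (Fin.sum_univ_succ f)

theorem sum_chain_sq_sub {m : ℕ} (A : Fin (m + 1) → ℝ) (B : Fin m → ℝ) (b : ℝ) :
    (∑ j, ((A j.castSucc - B j) ^ 2 + (A j.castSucc + B j))
        + (A (Fin.last m) ^ 2 + A (Fin.last m)))
      - ((b - A 0) ^ 2 + (b + A 0) + ∑ j, ((B j - A j.succ) ^ 2 + (B j + A j.succ)))
      = 2 * (b * A 0 + ∑ j, B j * A j.succ) - 2 * ∑ j, A j.castSucc * B j - (b ^ 2 + b) := by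
  have hdiff : ∑ j, ((A j.castSucc - B j) ^ 2 + (A j.castSucc + B j))
      - ∑ j, ((B j - A j.succ) ^ 2 + (B j + A j.succ))
      = ∑ j : Fin m, ((A j.castSucc ^ 2 + A j.castSucc) - (A j.succ ^ 2 + A j.succ))
        + 2 * ∑ j, B j * A j.succ - 2 * ∑ j, A j.castSucc * B j := by
    rw [← Finset.sum_sub_distrib, Finset.mul_sum, Finset.mul_sum, ← Finset.sum_add_distrib,
      ← Finset.sum_sub_distrib]
    exact Finset.sum_congr rfl fun j _ => by ring
  rw [Fin.sum_castSucc_sub_succ fun i => A i ^ 2 + A i] at hdiff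
  linear_combination hdiff

theorem Qker_eq_exp_sum_fst (m : ℕ) (g z u : Fin (m + 1) → ℝ) :
    Qker m g u z = exp (g 0 * exp (z 0) + ∑ j, (1 * exp (u j - z j)
      + Fin.lastCases 0 (fun j => g j.succ) j
        * exp (Fin.lastCases 0 (fun j => z j.succ) j - u j))) := by
  rw [Qker, Fin.sum_univ_castSucc]
  simp only [Fin.lastCases_castSucc, Fin.lastCases_last, one_mul, zero_mul, add_zero]
  ring_nf

theorem Qker_eq_exp_sum_snd (m : ℕ) (g x v : Fin (m + 1) → ℝ) :
    Qker m g x v = exp (0 + ∑ j, (g j * exp (v j - Fin.cases 0 (fun j => x j.castSucc) j)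
      + 1 * exp (x j - v j))) := by
  rw [Qker, Finset.sum_add_distrib, Finset.sum_add_distrib, Fin.sum_univ_succ (fun j => g j * _),
    Fin.sum_univ_castSucc fun j => 1 * exp (x j - v j)]
  simp only [Fin.cases_zero, Fin.cases_succ, one_mul, zero_add, sub_zero]
  ring_nf

/-- The kernel `Q` intertwines the quadratic Hamiltonians of the `B_n` and
`BC_n` open Toda chains, `n = m + 1 ≥ 1`. -/
theorem B_BC_intertwining (m : ℕ) (g : Fin (m + 1) → ℝ)
    (x z : Fin (m + 1) → ℝ) :
    -(1/2) * (∑ i : Fin (m + 1), pd2 (fun u => Qker m g u z) i x)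
      + (g 0 * Real.exp (x 0)
          + ∑ i : Fin m, g i.succ * Real.exp (x i.succ - x i.castSucc)) * Qker m g x z
    = -(1/2) * (∑ i : Fin (m + 1), pd2 (fun v => Qker m g x v) i z)
      + ((g 0 / 2) * (Real.exp (z 0) + g 0 * Real.exp (2 * z 0))
          + ∑ i : Fin m, g i.succ * Real.exp (z i.succ - z i.castSucc)) * Qker m g x z := by
  simp only [pd2_eq_of_eq_exp_sum (Qker_eq_exp_sum_fst m g z),
    pd2_eq_of_eq_exp_sum (Qker_eq_exp_sum_snd m g x), ← Finset.sum_mul]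
  rw [Fin.sum_univ_castSucc, Fin.sum_univ_succ]
  simp only [Fin.lastCases_castSucc, Fin.lastCases_last, Fin.cases_zero, Fin.cases_succ, one_mul,
    zero_mul, sub_zero, add_zero]
  have hchain := sum_chain_sq_sub (fun i => exp (x i - z i))
    (fun j => g j.succ * exp (z j.succ - x j.castSucc)) (g 0 * exp (z 0))
  have hB (j : Fin m) : g j.succ * exp (z j.succ - x j.castSucc) * exp (x j.succ - z j.succ)
      = g j.succ * exp (x j.succ - x j.castSucc) := by
    rw [mul_assoc, ← exp_add]; ring_nf
  have hBC (j : Fin m) :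
      exp (x j.castSucc - z j.castSucc) * (g j.succ * exp (z j.succ - x j.castSucc))
      = g j.succ * exp (z j.succ - z j.castSucc) := by
    rw [mul_left_comm, ← exp_add]; ring_nf
  have hB₀ : g 0 * exp (z 0) * exp (x 0 - z 0) = g 0 * exp (x 0) := by
    rw [mul_assoc, ← exp_add]; ring_nf
  have hBC₀ : exp (z 0) * exp (z 0) = exp (2 * z 0) := by
    rw [← exp_add]; ring_nf
  simp only [hB, hBC, hB₀] at hchain
  linear_combination (-(1/2) * hchain + (g 0 ^ 2 / 2) * hBC₀) * Qker m g x z
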